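/- arXiv:1304.2699 — 2 statements merged into one kernel-verified Lean document; each statement's English description precedes it below -/
import Mathlib

section
/- For every n ∈ ℕ with n ≥ 2, Π_{1 ≤ k ≤ n−1, k regular (mod n)} sin(kπ/n) = κ(n) / 2^{ρ(n)−1}, where κ(n) = Π_{p | n} p is the largest squarefree divisor of n. -/
/-!
Write `k / n` in lowest terms as `m / N`, with `d = gcd k n`, `N = n / d`, `m = k / d`.
Cancelling `d`, the condition `n ∣ k (k x - 1)` becomes `N ∣ k x - 1`, so `k` is regular
exactly when `gcd d N = 1`, i.e. when `N` is a unitary divisor of `n`. Hence the regular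
`k ∈ [1, n - 1]` correspond to the pairs `(N, m)` with `N ≠ 1` a unitary divisor of `n` and
`m` a totative of `N`. For fixed `N`, the product of `2 sin (m π / N)` over the totatives is
`∏ |1 - ζ|` over the primitive `N`-th roots of unity, i.e. `Φ_N(1)`. This is `p` when `N` is a
power of a prime `p` and `1` otherwise, and the unitary prime-power divisors of `n` are exactly
the `p ^ v_p(n)`; so `∏ 2 sin (k π / n) = κ(n)`.
-/

open Finset Real
open scoped Classical

/-- `k` is regular (mod `n`): there is an integer `x` with `k² x ≡ k (mod n)`. -/
def IsRegularMod (k n : ℕ) : Prop := ∃ x : ℤ, (n : ℤ) ∣ (k : ℤ) ^ 2 * x - (k : ℤ)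

/-- `Reg_n`, the set of `k ∈ {1,…,n}` that are regular (mod `n`). -/
noncomputable def Reg (n : ℕ) : Finset ℕ :=
  (Finset.Icc 1 n).filter fun k => IsRegularMod k n

/-- `κ(n) = ∏_{p ∣ n} p`, the largest squarefree divisor of `n`. -/
def kappa (n : ℕ) : ℕ := ∏ p ∈ n.primeFactors, p

lemma isRegularMod_mul_iff {d m N : ℕ} (hd : d ≠ 0) (hmN : m.Coprime N) :
    IsRegularMod (d * m) (d * N) ↔ d.Coprime N := by
  have hdvd (x : ℤ) : ((d * N : ℕ) : ℤ) ∣ ((d * m : ℕ) : ℤ) ^ 2 * x - (d * m : ℕ) ↔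
      (N : ℤ) ∣ (d * m : ℕ) * x - 1 := by
    rw [show ((d * m : ℕ) : ℤ) ^ 2 * x - (d * m : ℕ) = d * (m * ((d * m : ℕ) * x - 1)) by
      push_cast; ring, Nat.cast_mul, mul_dvd_mul_iff_left (by exact_mod_cast hd)]
    exact ⟨(Nat.isCoprime_iff_coprime.mpr hmN.symm).dvd_of_dvd_mul_left,
      (Dvd.dvd.mul_left · _)⟩
  refine Iff.trans ?_ (Nat.coprime_mul_iff_left.trans (and_iff_left hmN))
  rw [← Nat.isCoprime_iff_coprime]
  simp only [IsRegularMod, hdvd]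
  constructor
  · rintro ⟨x, y, hy⟩
    exact ⟨x, -y, by linear_combination hy⟩
  · rintro ⟨u, v, huv⟩
    exact ⟨u, -v, by linear_combination huv⟩

lemma isRegularMod_iff {k n : ℕ} (hn : n ≠ 0) :
    IsRegularMod k n ↔ (k.gcd n).Coprime (n / k.gcd n) := by
  have hgcd : k.gcd n ≠ 0 := Nat.gcd_ne_zero_right hn
  have := isRegularMod_mul_iff hgcd (Nat.coprime_div_gcd_div_gcd (Nat.pos_of_ne_zero hgcd))
  rwa [Nat.mul_div_cancel' (Nat.gcd_dvd_left k n), Nat.mul_div_cancel' (Nat.gcd_dvd_right k n)]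
    at this

def unitaryDivisors (n : ℕ) : Finset ℕ := n.divisors.filter fun N => N.Coprime (n / N)

def totatives (N : ℕ) : Finset ℕ := (range N).filter (·.Coprime N)

lemma div_pos_of_dvd_of_ne_zero {N n : ℕ} (hNn : N ∣ n) (hn : n ≠ 0) : 0 < n / N :=
  Nat.pos_of_ne_zero fun h => hn (by rw [← Nat.div_mul_cancel hNn, h, zero_mul])

lemma gcd_div_mul_eq {N n m : ℕ} (hNn : N ∣ n) (hm : m.Coprime N) :
    (n / N * m).gcd n = n / N := by
  nth_rw 2 [← Nat.div_mul_cancel hNn]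
  rw [Nat.gcd_mul_left, hm.gcd_eq_one, mul_one]

lemma div_div_gcd_mul_div_gcd {n : ℕ} (hn : n ≠ 0) (k : ℕ) :
    n / (n / k.gcd n) * (k / k.gcd n) = k := by
  rw [Nat.div_div_self (Nat.gcd_dvd_right k n) hn, Nat.mul_div_cancel' (Nat.gcd_dvd_left k n)]

lemma mem_sigma_of_isRegularMod {n k : ℕ} (hn : n ≠ 0)
    (hk : k ∈ (Icc 1 (n - 1)).filter (IsRegularMod · n)) :
    (⟨n / k.gcd n, k / k.gcd n⟩ : Σ _ : ℕ, ℕ) ∈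
      ((unitaryDivisors n).erase 1).sigma totatives := by
  simp only [mem_filter, mem_Icc] at hk
  obtain ⟨⟨hk1, hkn⟩, hreg⟩ := hk
  have hd : 0 < k.gcd n := Nat.gcd_pos_of_pos_left n hk1
  have hm : 0 < k / k.gcd n := Nat.div_pos (Nat.gcd_le_left n hk1) hd
  have hmN : k / k.gcd n < n / k.gcd n :=
    Nat.div_lt_div_of_lt_of_dvd (Nat.gcd_dvd_right k n) (by omega)
  simp only [mem_sigma, unitaryDivisors, totatives, mem_erase, mem_filter, Nat.mem_divisors,
    mem_range]
  refine ⟨⟨by omega, ⟨Nat.div_dvd_of_dvd (Nat.gcd_dvd_right k n), hn⟩, ?_⟩, hmN,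
    Nat.coprime_div_gcd_div_gcd hd⟩
  rw [Nat.div_div_self (Nat.gcd_dvd_right k n) hn]
  exact ((isRegularMod_iff hn).mp hreg).symm

lemma div_mul_mem_filter_isRegularMod {n N m : ℕ} (hN : N ∈ (unitaryDivisors n).erase 1)
    (hm : m ∈ totatives N) :
    n / N * m ∈ (Icc 1 (n - 1)).filter (IsRegularMod · n) := by
  simp only [unitaryDivisors, totatives, mem_erase, mem_filter, Nat.mem_divisors,
    mem_range] at hN hm
  obtain ⟨hN1, ⟨hNn, hn⟩, hcop⟩ := hN
  obtain ⟨hmN, hmcop⟩ := hm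
  have hm0 : m ≠ 0 := by
    rintro rfl
    exact hN1 (Nat.coprime_zero_left N |>.mp hmcop)
  have hd := div_pos_of_dvd_of_ne_zero hNn hn
  have hlt : n / N * m < n := by
    calc n / N * m < n / N * N := Nat.mul_lt_mul_of_pos_left hmN hd
      _ = n := Nat.div_mul_cancel hNn
  simp only [mem_filter, mem_Icc]
  refine ⟨⟨Nat.mul_pos hd (Nat.pos_of_ne_zero hm0), by omega⟩, ?_⟩
  rw [isRegularMod_iff hn, gcd_div_mul_eq hNn hmcop, Nat.div_div_self hNn hn]
  exact hcop.symm

lemma prod_filter_isRegularMod {M : Type*} [CommMonoid M] {n : ℕ} (hn : n ≠ 0) (f : ℕ → M) :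
    ∏ k ∈ (Icc 1 (n - 1)).filter (IsRegularMod · n), f k =
      ∏ N ∈ (unitaryDivisors n).erase 1, ∏ m ∈ totatives N, f (n / N * m) := by
  rw [prod_sigma']
  refine prod_nbij' (fun k => ⟨n / k.gcd n, k / k.gcd n⟩) (fun x => n / x.1 * x.2)
    (fun k hk => mem_sigma_of_isRegularMod hn hk)
    (fun x hx => div_mul_mem_filter_isRegularMod (mem_sigma.mp hx).1 (mem_sigma.mp hx).2)
    (fun k _ => div_div_gcd_mul_div_gcd hn k) ?_ ?_
  · rintro ⟨N, m⟩ hx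
    obtain ⟨hN, hm⟩ := mem_sigma.mp hx
    have hNn : N ∣ n := Nat.dvd_of_mem_divisors (mem_filter.mp (mem_erase.mp hN).2).1
    have hmcop : m.Coprime N := (mem_filter.mp hm).2
    simp only [gcd_div_mul_eq hNn hmcop, Nat.div_div_self hNn hn,
      Nat.mul_div_cancel_left m (div_pos_of_dvd_of_ne_zero hNn hn)]
  · intro k _
    rw [div_div_gcd_mul_div_gcd hn k]

open Polynomial in
lemma IsPrimitiveRoot.eval_one_cyclotomic_eq_prod_totatives {K : Type*} [CommRing K] [IsDomain K]
    {ζ : K} {N : ℕ} (hζ : IsPrimitiveRoot ζ N) :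
    (cyclotomic N K).eval 1 = ∏ m ∈ totatives N, (1 - ζ ^ m) := by
  rcases N.eq_zero_or_pos with rfl | hN
  · simp [totatives]
  have := NeZero.of_pos hN
  have himage : primitiveRoots N K = (totatives N).image (ζ ^ ·) := by
    ext μ
    simp [mem_primitiveRoots hN, hζ.isPrimitiveRoot_iff, totatives, and_assoc]
  rw [cyclotomic_eq_prod_X_sub_primitiveRoots hζ, eval_prod, himage, prod_image]
  · simp
  · intro a ha b hb hab
    exact hζ.pow_inj (mem_range.mp (mem_filter.mp ha).1) (mem_range.mp (mem_filter.mp hb).1) hab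

lemma norm_one_sub_exp_two_mul_I {x : ℝ} (h0 : 0 ≤ x) (hπ : x ≤ π) :
    ‖1 - Complex.exp (Complex.I * (2 * x : ℝ))‖ = 2 * sin x := by
  rw [norm_sub_rev, Complex.norm_exp_I_mul_ofReal_sub_one, mul_div_cancel_left₀ x two_ne_zero,
    Real.norm_of_nonneg (mul_nonneg zero_le_two (sin_nonneg_of_nonneg_of_le_pi h0 hπ))]

open Polynomial in
lemma prod_two_mul_sin_totatives (N : ℕ) :
    ∏ m ∈ totatives N, 2 * sin (m * π / N) = (cyclotomic N ℝ).eval 1 := by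
  rcases N.eq_zero_or_pos with rfl | hN
  · simp [totatives]
  have hNR : (0 : ℝ) < N := Nat.cast_pos.mpr hN
  set ζ := Complex.exp (2 * π * Complex.I / N)
  have hterm : ∀ m ∈ totatives N, ‖1 - ζ ^ m‖ = 2 * sin (m * π / N) := by
    intro m hm
    have hmN : (m : ℝ) ≤ N := by exact_mod_cast (mem_range.mp (mem_filter.mp hm).1).le
    have hζm : ζ ^ m = Complex.exp (Complex.I * (2 * (m * π / N) : ℝ)) := by
      rw [← Complex.exp_nat_mul]
      push_cast
      ring_nf
    rw [hζm, norm_one_sub_exp_two_mul_I (by positivity)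
      (div_le_of_le_mul₀ hNR.le pi_pos.le (by nlinarith [pi_pos]))]
  have hreal : (cyclotomic N ℂ).eval 1 = (((cyclotomic N ℝ).eval 1 : ℝ) : ℂ) := by
    simpa using cyclotomic.eval_apply (1 : ℝ) N Complex.ofRealHom
  calc ∏ m ∈ totatives N, 2 * sin (m * π / N) = ‖∏ m ∈ totatives N, (1 - ζ ^ m)‖ := by
        rw [norm_prod, prod_congr rfl hterm]
    _ = (cyclotomic N ℝ).eval 1 := by
        rw [← (Complex.isPrimitiveRoot_exp N hN.ne').eval_one_cyclotomic_eq_prod_totatives, hreal,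
          Complex.norm_real, Real.norm_of_nonneg (cyclotomic_nonneg N le_rfl)]

lemma pow_factorization_mem_unitaryDivisors {n p : ℕ} (hp : p ∈ n.primeFactors) :
    p ^ n.factorization p ∈ (unitaryDivisors n).erase 1 := by
  obtain ⟨hp, hpn, hn⟩ := Nat.mem_primeFactors.mp hp
  have hpos : 0 < n.factorization p := hp.factorization_pos_of_dvd hn hpn
  simp only [unitaryDivisors, mem_erase, mem_filter, Nat.mem_divisors]
  exact ⟨(Nat.one_lt_pow hpos.ne' hp.one_lt).ne', ⟨Nat.ordProj_dvd n p, hn⟩,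
    (Nat.coprime_ordCompl hp hn).pow_left _⟩

lemma eq_factorization_of_pow_mem_unitaryDivisors {n p k : ℕ} (hp : p.Prime) (hk : k ≠ 0)
    (h : p ^ k ∈ unitaryDivisors n) : k = n.factorization p := by
  obtain ⟨⟨hdvd, -⟩, hcop⟩ := mem_filter.mp h |>.imp_left Nat.mem_divisors.mp
  rw [← Nat.mul_div_cancel' hdvd, Nat.factorization_eq_of_coprime_left hcop
    (by simp [hp, hk, hp.ne_zero])]
  simp [hp]

open Polynomial in
lemma prod_eval_one_cyclotomic_unitaryDivisors {R : Type*} [CommRing R] (n : ℕ) :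
    ∏ N ∈ (unitaryDivisors n).erase 1, (cyclotomic N R).eval 1 = kappa n := by
  have hpos {p : ℕ} (hp : p ∈ n.primeFactors) : n.factorization p ≠ 0 :=
    Finsupp.mem_support_iff.mp (n.support_factorization ▸ hp)
  have hsub :
      n.primeFactors.image (fun p => p ^ n.factorization p) ⊆ (unitaryDivisors n).erase 1 :=
    fun N hN => by
      obtain ⟨p, hp, rfl⟩ := mem_image.mp hN
      exact pow_factorization_mem_unitaryDivisors hp
  rw [← prod_subset hsub, prod_image, kappa, Nat.cast_prod]
  · refine prod_congr rfl fun p hp => ?_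
    have := Fact.mk (Nat.prime_of_mem_primeFactors hp)
    rw [← Nat.succ_pred_eq_of_ne_zero (hpos hp), eval_one_cyclotomic_prime_pow]
  · intro p hp q hq hpq
    have hmin := congrArg Nat.minFac hpq
    simp only at hmin
    rwa [(Nat.prime_of_mem_primeFactors hp).pow_minFac (hpos hp),
      (Nat.prime_of_mem_primeFactors hq).pow_minFac (hpos hq)] at hmin
  · intro N hN hNI
    refine eval_one_cyclotomic_not_prime_pow fun {p} hp k hpk => hNI ?_
    subst hpk
    obtain ⟨hN1, hNu⟩ := mem_erase.mp hN
    have hk : k ≠ 0 := by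
      rintro rfl
      exact hN1 (pow_zero p)
    obtain ⟨hdvd, hn⟩ := Nat.mem_divisors.mp (mem_filter.mp hNu).1
    refine mem_image.mpr
      ⟨p, Nat.mem_primeFactors.mpr ⟨hp, (dvd_pow_self p hk).trans hdvd, hn⟩, ?_⟩
    rw [← eq_factorization_of_pow_mem_unitaryDivisors hp hk hNu]

lemma prod_two_mul_sin_isRegularMod {n : ℕ} (hn : n ≠ 0) :
    ∏ k ∈ (Icc 1 (n - 1)).filter (IsRegularMod · n), 2 * sin (k * π / n) = kappa n := by
  rw [prod_filter_isRegularMod hn, ← prod_eval_one_cyclotomic_unitaryDivisors]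
  refine prod_congr rfl fun N hN => ?_
  have hNn : N ∣ n := Nat.dvd_of_mem_divisors (mem_filter.mp (mem_erase.mp hN).2).1
  have hN : (N : ℝ) ≠ 0 := Nat.cast_ne_zero.mpr (ne_zero_of_dvd_ne_zero hn hNn)
  rw [← prod_two_mul_sin_totatives]
  refine prod_congr rfl fun m _ => ?_
  rw [Nat.cast_mul, Nat.cast_div hNn hN]
  field_simp

lemma isRegularMod_self (n : ℕ) : IsRegularMod n n := ⟨0, by simp⟩

lemma card_Reg {n : ℕ} (hn : n ≠ 0) :
    (Reg n).card = ((Icc 1 (n - 1)).filter (IsRegularMod · n)).card + 1 := by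
  have hinsert : Reg n = insert n ((Icc 1 (n - 1)).filter (IsRegularMod · n)) := by
    ext k
    simp only [Reg, mem_insert, mem_filter, mem_Icc]
    constructor
    · rintro ⟨hk, hreg⟩
      rcases eq_or_ne k n with rfl | hkn
      · exact Or.inl rfl
      · exact Or.inr ⟨by omega, hreg⟩
    · rintro (rfl | ⟨hk, hreg⟩)
      · exact ⟨by omega, isRegularMod_self k⟩
      · exact ⟨by omega, hreg⟩
  rw [hinsert, card_insert_of_notMem (by simp only [mem_filter, mem_Icc]; omega)]

theorem prod_sin_reg (n : ℕ) (hn : 2 ≤ n) :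
    ∏ k ∈ (Finset.Icc 1 (n - 1)).filter (fun k => IsRegularMod k n),
        Real.sin (k * Real.pi / n) =
      (kappa n : ℝ) / 2 ^ ((Reg n).card - 1) := by
  have hn0 : n ≠ 0 := by omega
  rw [card_Reg hn0, Nat.add_sub_cancel, eq_div_iff (by positivity),
    ← prod_two_mul_sin_isRegularMod hn0, prod_mul_distrib, prod_const, mul_comm]
end

section
/- For every odd n ∈ ℕ with n ≥ 3, Π_{1 ≤ k ≤ n−1, k regular (mod n)} cos(kπ/n) = (−1/4)^{(ρ(n)−1)/2}. -/
open Finset Real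
open scoped Classical

/-!
The regular residues in `[1, n - 1]` are stable under `k ↦ n - k` and, `2` being a unit mod the
odd `n`, permuted by doubling `k ↦ 2k mod n`. Writing `sin (2kπ/n) = 2 sin (kπ/n) cos (kπ/n)`
and reducing `2k` mod `n` at the cost of a sign `(-1)^⌊2k/n⌋`, the product of the positive
numbers `sin (kπ/n)` appears on both sides and cancels, leaving `∏ cos (kπ/n) = ± 2^(-|S|)`.
Pairing `k` with `n - k`, exactly one of `⌊2k/n⌋`, `⌊2(n-k)/n⌋` is `1`, so the sign is
`(-1)^(|S|/2)` and `|S|` is even.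
-/

lemma isRegularMod_iff_exists_zmod {k n : ℕ} :
    IsRegularMod k n ↔ ∃ x : ZMod n, (k : ZMod n) ^ 2 * x = k := by
  constructor
  · rintro ⟨x, hx⟩
    refine ⟨x, ?_⟩
    rw [← ZMod.intCast_zmod_eq_zero_iff_dvd] at hx
    push_cast at hx
    exact sub_eq_zero.mp hx
  · rintro ⟨x, hx⟩
    refine ⟨x.cast, ?_⟩
    rw [← ZMod.intCast_zmod_eq_zero_iff_dvd]
    push_cast
    rw [hx, sub_self]

lemma IsRegularMod.mul_mod {a k n : ℕ} (hk : IsRegularMod k n) (ha : a.Coprime n) :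
    IsRegularMod (a * k % n) n := by
  obtain ⟨x, hx⟩ := isRegularMod_iff_exists_zmod.mp hk
  obtain ⟨u, hu⟩ := (ZMod.isUnit_iff_coprime a n).mpr ha
  refine isRegularMod_iff_exists_zmod.mpr ⟨↑u⁻¹ * x, ?_⟩
  rw [ZMod.natCast_mod, Nat.cast_mul, ← hu]
  calc ((u : ZMod n) * (k : ZMod n)) ^ 2 * (↑u⁻¹ * x)
        = u * (u * ↑u⁻¹) * (k ^ 2 * x) := by ring
    _ = (u : ZMod n) * k := by rw [Units.mul_inv, hx, mul_one]

lemma IsRegularMod.sub {k n : ℕ} (hk : IsRegularMod k n) : IsRegularMod (n - k) n := by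
  obtain hkn | hnk := le_total k n
  · obtain ⟨x, hx⟩ := isRegularMod_iff_exists_zmod.mp hk
    refine isRegularMod_iff_exists_zmod.mpr ⟨-x, ?_⟩
    rw [Nat.cast_sub hkn, ZMod.natCast_self]
    linear_combination -hx
  · rw [Nat.sub_eq_zero_of_le hnk]
    exact ⟨0, by simp⟩

lemma two_mul_div_add_two_mul_sub_div {n k : ℕ} (hn : Odd n) (hk0 : 0 < k) (hk : k < n) :
    2 * k / n + 2 * (n - k) / n = 1 := by
  obtain ⟨j, rfl⟩ := hn
  obtain hlt | hgt := lt_or_gt_of_ne (show 2 * k ≠ 2 * j + 1 by omega)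
  · rw [Nat.div_eq_of_lt hlt, Nat.div_eq_of_lt_le (k := 1) (by omega) (by omega)]
  · rw [Nat.div_eq_of_lt_le (k := 1) (by omega) (by omega), Nat.div_eq_of_lt (by omega)]

lemma two_mul_mod_pos {n k : ℕ} (hn : Odd n) (hk0 : 0 < k) (hk : k < n) : 0 < 2 * k % n := by
  refine Nat.pos_of_ne_zero fun h => ?_
  have hdvd : n ∣ k :=
    (Nat.coprime_two_left.mpr hn).symm.dvd_of_dvd_mul_left (Nat.dvd_of_mod_eq_zero h)
  exact absurd (Nat.le_of_dvd hk0 hdvd) (by omega)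

lemma two_mul_sum_two_mul_div {n : ℕ} (hn : Odd n) {S : Finset ℕ} (hS : S ⊆ Ioo 0 n)
    (hneg : ∀ k ∈ S, n - k ∈ S) : 2 * ∑ k ∈ S, 2 * k / n = #S := by
  have hlt : ∀ k ∈ S, 0 < k ∧ k < n := fun k hk => mem_Ioo.mp (hS hk)
  have hswap : ∑ k ∈ S, 2 * (n - k) / n = ∑ k ∈ S, 2 * k / n :=
    sum_nbij' (n - ·) (n - ·) hneg hneg (fun k hk => by have := hlt k hk; omega)
      (fun k hk => by have := hlt k hk; omega) (fun _ _ => rfl)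
  calc 2 * ∑ k ∈ S, 2 * k / n = ∑ k ∈ S, (2 * k / n + 2 * (n - k) / n) := by
        rw [sum_add_distrib, hswap, two_mul]
    _ = ∑ k ∈ S, 1 :=
        sum_congr rfl fun k hk => two_mul_div_add_two_mul_sub_div hn (hlt k hk).1 (hlt k hk).2
    _ = #S := by rw [card_eq_sum_ones]

lemma prod_comp_two_mul_mod {M : Type*} [CommMonoid M] {n : ℕ} (hn : Odd n) {S : Finset ℕ}
    (hS : S ⊆ range n) (hdouble : ∀ k ∈ S, 2 * k % n ∈ S) (g : ℕ → M) :
    ∏ k ∈ S, g (2 * k % n) = ∏ k ∈ S, g k := by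
  have hinj : Set.InjOn (2 * · % n) S := fun a ha b hb hab => by
    have h := Nat.ModEq.cancel_left_of_coprime (by simpa using hn) hab
    rwa [Nat.ModEq, Nat.mod_eq_of_lt (mem_range.mp (hS ha)),
      Nat.mod_eq_of_lt (mem_range.mp (hS hb))] at h
  have hbij := (S.finite_toSet.injOn_iff_bijOn_of_mapsTo hdouble).mp hinj
  exact prod_nbij _ hdouble hinj hbij.surjOn fun _ _ => rfl

lemma sin_nat_mul_pi_div (a n : ℕ) :
    sin (a * π / n) = (-1) ^ (a / n) * sin ((a % n : ℕ) * π / n) := by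
  rcases Nat.eq_zero_or_pos n with rfl | hn
  · simp
  have h : (a : ℝ) * π / n = (a % n : ℕ) * π / n + (a / n : ℕ) * π := by
    conv_lhs => rw [← Nat.mod_add_div a n]
    push_cast
    field_simp
  rw [h, sin_add_nat_mul_pi]

theorem prod_cos_pi_div_of_doubling_invariant {n : ℕ} (hn : Odd n) {S : Finset ℕ}
    (hS : S ⊆ Ioo 0 n) (hdouble : ∀ k ∈ S, 2 * k % n ∈ S)
    (hneg : ∀ k ∈ S, n - k ∈ S) :
    ∏ k ∈ S, cos (k * π / n) = (-(1 / 4)) ^ (#S / 2) := by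
  set A := ∏ k ∈ S, sin (k * π / n)
  set P := ∏ k ∈ S, cos (k * π / n)
  have hn0 : (0 : ℝ) < n := by exact_mod_cast hn.pos
  have hA : 0 < A := prod_pos fun k hk => by
    obtain ⟨hk0, hkn⟩ := mem_Ioo.mp (hS hk)
    have hk0' : (0 : ℝ) < k := by exact_mod_cast hk0
    apply sin_pos_of_pos_of_lt_pi (by positivity)
    rw [div_lt_iff₀ hn0, mul_comm]
    gcongr
  have hdoubleAngle : ∏ k ∈ S, sin ((2 * k : ℕ) * π / n) = 2 ^ #S * (A * P) := by
    have h (k : ℕ) :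
        sin ((2 * k : ℕ) * π / n) = 2 * (sin (k * π / n) * cos (k * π / n)) := by
      rw [← mul_assoc, ← sin_two_mul]
      push_cast
      ring_nf
    simp only [h, prod_mul_distrib, prod_const, A, P]
  have hsum := two_mul_sum_two_mul_div hn hS hneg
  have hsign : ∏ k ∈ S, sin ((2 * k : ℕ) * π / n) = (-1) ^ (#S / 2) * A := by
    have hS' : S ⊆ range n := fun k hk => mem_range.mpr (mem_Ioo.mp (hS hk)).2
    rw [prod_congr rfl fun k _ => sin_nat_mul_pi_div (2 * k) n, prod_mul_distrib,
      prod_pow_eq_pow_sum, prod_comp_two_mul_mod hn hS' hdouble fun k => sin (k * π / n),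
      ← hsum, Nat.mul_div_cancel_left _ two_pos]
  have hP : 2 ^ #S * P = (-1) ^ (#S / 2) := by
    apply mul_right_cancel₀ hA.ne'
    linear_combination hdoubleAngle.symm.trans hsign
  rw [eq_div_of_mul_eq (by positivity) ((mul_comm _ _).trans hP), ← hsum, pow_mul,
    Nat.mul_div_cancel_left _ two_pos, ← div_pow]
  norm_num

theorem prod_cos_reg_general (n : ℕ) (hodd : Odd n) :
    ∏ k ∈ (Finset.Icc 1 (n - 1)).filter (fun k => IsRegularMod k n),
        Real.cos (k * Real.pi / n) =
      (-(1 / 4) : ℝ) ^ (((Reg n).card - 1) / 2) := by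
  set S := (Icc 1 (n - 1)).filter (fun k => IsRegularMod k n)
  have hReg : Reg n = insert n S := by
    rw [Reg, ← insert_Icc_sub_one_right_eq_Icc hodd.pos, filter_insert,
      if_pos ⟨0, by simp⟩]
  have hn : n ∉ S := by simp only [S, mem_filter, mem_Icc]; omega
  rw [hReg, card_insert_of_notMem hn, Nat.add_sub_cancel]
  refine prod_cos_pi_div_of_doubling_invariant hodd ?_ ?_ ?_
  · intro k hk
    simp only [S, mem_filter, mem_Icc] at hk
    exact mem_Ioo.mpr (by omega)
  · intro k hk
    simp only [S, mem_filter, mem_Icc] at hk ⊢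
    have hpos := two_mul_mod_pos hodd (k := k) (by omega) (by omega)
    have hlt := Nat.mod_lt (2 * k) hodd.pos
    exact ⟨by omega, hk.2.mul_mod (Nat.coprime_two_left.mpr hodd)⟩
  · intro k hk
    simp only [S, mem_filter, mem_Icc] at hk ⊢
    exact ⟨by omega, hk.2.sub⟩

theorem prod_cos_reg (n : ℕ) (hn : 3 ≤ n) (hodd : Odd n) :
    ∏ k ∈ (Finset.Icc 1 (n - 1)).filter (fun k => IsRegularMod k n),
        Real.cos (k * Real.pi / n) =
      (-(1 / 4) : ℝ) ^ (((Reg n).card - 1) / 2) :=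
  prod_cos_reg_general n hodd
end
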